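/- arXiv:1006.1570 — 2 statements merged into one kernel-verified Lean document; each statement's English description precedes it below -/
import Mathlib

section
/- Let D, A, R, B be nonnegative real random variables such that D is independent of the triple (A, R, B). Then for any θ > 0, γ > 0, ε > 0 and t ∈ ℝ, P( D^{1/γ} A ≥ e^{-t} and D^{1/γ} R^{1/γ} B ≥ e^{-t} ) ≤ e^{2θt} · E[D^{2θ/γ}] · E[R^{(1+ε)θ/γ}]^{1/(1+ε)} · ( E[A^{2(1+ε^{-1})θ}] · E[B^{2(1+ε^{-1})θ}] )^{1/(2(1+ε^{-1}))}, where all expectations take values in [0, ∞] and the right-hand side is interpreted in the extended reals. -/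
/-!
On the event, both `D^{1/γ} A` and `D^{1/γ} R^{1/γ} B` are at least `e^{-t}`, so their product,
raised to the power `θ`, is at least `e^{-2θt}`; that power is `D^{2θ/γ} R^{θ/γ} (AB)^θ`.
Markov's inequality bounds the probability by `e^{2θt}` times its expectation, independence
factors out `E[D^{2θ/γ}]`, Hölder with exponents `(1 + ε, 1 + ε⁻¹)` separates `R` from `AB`,
and Cauchy–Schwarz separates `A` from `B`.
-/

open MeasureTheory ProbabilityTheory
open scoped ENNReal

lemma Real.HolderConjugate.one_add_inv {ε : ℝ} (hε : 0 < ε) :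
    (1 + ε).HolderConjugate (1 + ε⁻¹) := by
  rw [Real.holderConjugate_iff]
  refine ⟨by linarith, ?_⟩
  field_simp
  ring

lemma Real.rpow_scaled_mul_scaled {d r a b : ℝ} (hd : 0 ≤ d) (hr : 0 ≤ r) (ha : 0 ≤ a)
    (hb : 0 ≤ b) (γ θ : ℝ) :
    (d ^ (1 / γ) * a * (d ^ (1 / γ) * r ^ (1 / γ) * b)) ^ θ
      = d ^ (2 * θ / γ) * (r ^ (θ / γ) * (a * b) ^ θ) := by
  have hr' : 0 ≤ r ^ (1 / γ) := Real.rpow_nonneg hr _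
  rw [show d ^ (1 / γ) * a * (d ^ (1 / γ) * r ^ (1 / γ) * b)
      = (d ^ (1 / γ)) ^ 2 * (r ^ (1 / γ) * (a * b)) by ring,
    Real.mul_rpow (sq_nonneg _) (mul_nonneg hr' (mul_nonneg ha hb)),
    Real.mul_rpow hr' (mul_nonneg ha hb),
    ← Real.rpow_natCast, ← Real.rpow_mul hd, ← Real.rpow_mul hd, ← Real.rpow_mul hr]
  push_cast; ring_nf

section Moments

variable {Ω : Type*} [MeasurableSpace Ω] (μ : Measure Ω)

lemma measure_exp_neg_le_and_le {X Y : Ω → ℝ} (hX : Measurable X) (hY : Measurable Y)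
    {θ : ℝ} (hθ : 0 ≤ θ) (t : ℝ) :
    μ {ω | Real.exp (-t) ≤ X ω ∧ Real.exp (-t) ≤ Y ω}
      ≤ ENNReal.ofReal (Real.exp (2 * θ * t)) * ∫⁻ ω, ENNReal.ofReal ((X ω * Y ω) ^ θ) ∂μ := by
  have hsub : {ω | Real.exp (-t) ≤ X ω ∧ Real.exp (-t) ≤ Y ω}
      ⊆ {ω | ENNReal.ofReal (Real.exp (-(2 * θ * t))) ≤ ENNReal.ofReal ((X ω * Y ω) ^ θ)} := by
    rintro ω ⟨hXω, hYω⟩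
    refine ENNReal.ofReal_le_ofReal ?_
    have hsq : Real.exp (-t) ^ (2 : ℕ) ≤ X ω * Y ω := by
      rw [sq]; exact mul_le_mul hXω hYω (Real.exp_pos _).le ((Real.exp_pos _).le.trans hXω)
    calc Real.exp (-(2 * θ * t)) = (Real.exp (-t) ^ (2 : ℕ)) ^ θ := by
          rw [← Real.exp_nat_mul, ← Real.exp_mul]; push_cast; ring_nf
      _ ≤ (X ω * Y ω) ^ θ := Real.rpow_le_rpow (by positivity) hsq hθ
  calc μ _ ≤ μ {ω | ENNReal.ofReal (Real.exp (-(2 * θ * t)))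
              ≤ ENNReal.ofReal ((X ω * Y ω) ^ θ)} := measure_mono hsub
    _ ≤ (∫⁻ ω, ENNReal.ofReal ((X ω * Y ω) ^ θ) ∂μ) / ENNReal.ofReal (Real.exp (-(2 * θ * t))) :=
        meas_ge_le_lintegral_div (by fun_prop)
          (ENNReal.ofReal_pos.mpr (Real.exp_pos _)).ne' ENNReal.ofReal_ne_top
    _ = _ := by
        rw [div_eq_mul_inv, mul_comm, ← ENNReal.ofReal_inv_of_pos (Real.exp_pos _),
          ← Real.exp_neg, neg_neg]

variable {μ}

lemma lintegral_ofReal_rpow_mul_le_of_holderConjugate {f g : Ω → ℝ} (hf : Measurable f)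
    (hg : Measurable g) (hf0 : ∀ ω, 0 ≤ f ω) (hg0 : ∀ ω, 0 ≤ g ω) {p q : ℝ}
    (hpq : p.HolderConjugate q) (a b : ℝ) :
    ∫⁻ ω, ENNReal.ofReal (f ω ^ a) * ENNReal.ofReal (g ω ^ b) ∂μ
      ≤ (∫⁻ ω, ENNReal.ofReal (f ω ^ (p * a)) ∂μ) ^ (1 / p)
        * (∫⁻ ω, ENNReal.ofReal (g ω ^ (q * b)) ∂μ) ^ (1 / q) := by
  have hpow {h : Ω → ℝ} (h0 : ∀ ω, 0 ≤ h ω) {r : ℝ} (hr : 0 ≤ r) (c : ℝ) (ω : Ω) :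
      ENNReal.ofReal (h ω ^ c) ^ r = ENNReal.ofReal (h ω ^ (r * c)) := by
    rw [ENNReal.ofReal_rpow_of_nonneg (Real.rpow_nonneg (h0 ω) _) hr, ← Real.rpow_mul (h0 ω),
      mul_comm]
  simpa only [Pi.mul_apply, hpow hf0 hpq.nonneg, hpow hg0 hpq.symm.nonneg] using
    ENNReal.lintegral_mul_le_Lp_mul_Lq μ hpq (f := fun ω => ENNReal.ofReal (f ω ^ a))
      (g := fun ω => ENNReal.ofReal (g ω ^ b)) (by fun_prop) (by fun_prop)

lemma lintegral_ofReal_mul_rpow_le {f g : Ω → ℝ} (hf : Measurable f) (hg : Measurable g)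
    (hf0 : ∀ ω, 0 ≤ f ω) (hg0 : ∀ ω, 0 ≤ g ω) (s : ℝ) :
    ∫⁻ ω, ENNReal.ofReal ((f ω * g ω) ^ s) ∂μ
      ≤ ((∫⁻ ω, ENNReal.ofReal (f ω ^ (2 * s)) ∂μ)
          * ∫⁻ ω, ENNReal.ofReal (g ω ^ (2 * s)) ∂μ) ^ (1 / 2 : ℝ) := by
  simp_rw [Real.mul_rpow (hf0 _) (hg0 _), ENNReal.ofReal_mul (Real.rpow_nonneg (hf0 _) _)]
  rw [ENNReal.mul_rpow_of_nonneg _ _ (by norm_num)]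
  exact lintegral_ofReal_rpow_mul_le_of_holderConjugate hf hg hf0 hg0 .two_two s s

lemma lintegral_ofReal_rpow_mul_mul_rpow_le {R A B : Ω → ℝ} (hR : Measurable R)
    (hA : Measurable A) (hB : Measurable B) (hR0 : ∀ ω, 0 ≤ R ω) (hA0 : ∀ ω, 0 ≤ A ω)
    (hB0 : ∀ ω, 0 ≤ B ω) {ε : ℝ} (hε : 0 < ε) (a θ : ℝ) :
    ∫⁻ ω, ENNReal.ofReal (R ω ^ a) * ENNReal.ofReal ((A ω * B ω) ^ θ) ∂μ
      ≤ (∫⁻ ω, ENNReal.ofReal (R ω ^ ((1 + ε) * a)) ∂μ) ^ (1 / (1 + ε))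
        * ((∫⁻ ω, ENNReal.ofReal (A ω ^ (2 * (1 + ε⁻¹) * θ)) ∂μ)
          * ∫⁻ ω, ENNReal.ofReal (B ω ^ (2 * (1 + ε⁻¹) * θ)) ∂μ) ^ (1 / (2 * (1 + ε⁻¹))) := by
  have hq : 0 < 1 + ε⁻¹ := by positivity
  refine (lintegral_ofReal_rpow_mul_le_of_holderConjugate hR (hA.mul hB) hR0
    (fun ω => mul_nonneg (hA0 ω) (hB0 ω)) (.one_add_inv hε) a θ).trans ?_
  gcongr
  calc (∫⁻ ω, ENNReal.ofReal ((A ω * B ω) ^ ((1 + ε⁻¹) * θ)) ∂μ) ^ (1 / (1 + ε⁻¹))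
      ≤ (((∫⁻ ω, ENNReal.ofReal (A ω ^ (2 * (1 + ε⁻¹) * θ)) ∂μ)
          * ∫⁻ ω, ENNReal.ofReal (B ω ^ (2 * (1 + ε⁻¹) * θ)) ∂μ) ^ (1 / 2 : ℝ)) ^ (1 / (1 + ε⁻¹)) := by
        gcongr
        simpa only [← mul_assoc] using
          lintegral_ofReal_mul_rpow_le hA hB hA0 hB0 ((1 + ε⁻¹) * θ)
    _ = _ := by
        rw [← ENNReal.rpow_mul]
        congr 1
        field_simp

end Moments

theorem stmt_2_general {Ω : Type*} [MeasurableSpace Ω] (P : Measure Ω)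
    (D A R B : Ω → ℝ)
    (hDm : Measurable D) (hAm : Measurable A) (hRm : Measurable R) (hBm : Measurable B)
    (hD0 : ∀ ω, 0 ≤ D ω) (hA0 : ∀ ω, 0 ≤ A ω) (hR0 : ∀ ω, 0 ≤ R ω) (hB0 : ∀ ω, 0 ≤ B ω)
    (hindep : IndepFun D (fun ω => (A ω, R ω, B ω)) P)
    (θ γ ε t : ℝ) (hθ : 0 < θ) (hε : 0 < ε) :
    P {ω | Real.exp (-t) ≤ D ω ^ (1 / γ) * A ω ∧
           Real.exp (-t) ≤ D ω ^ (1 / γ) * R ω ^ (1 / γ) * B ω}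
      ≤ ENNReal.ofReal (Real.exp (2 * θ * t))
        * (∫⁻ ω, ENNReal.ofReal (D ω ^ (2 * θ / γ)) ∂P)
        * (∫⁻ ω, ENNReal.ofReal (R ω ^ ((1 + ε) * θ / γ)) ∂P) ^ (1 / (1 + ε))
        * ((∫⁻ ω, ENNReal.ofReal (A ω ^ (2 * (1 + ε⁻¹) * θ)) ∂P)
            * (∫⁻ ω, ENNReal.ofReal (B ω ^ (2 * (1 + ε⁻¹) * θ)) ∂P)) ^ (1 / (2 * (1 + ε⁻¹))) := by
  have hfactor : IndepFun (fun ω => ENNReal.ofReal (D ω ^ (2 * θ / γ)))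
      (fun ω => ENNReal.ofReal (R ω ^ (θ / γ)) * ENNReal.ofReal ((A ω * B ω) ^ θ)) P :=
    hindep.comp (φ := fun x => ENNReal.ofReal (x ^ (2 * θ / γ)))
      (ψ := fun y : ℝ × ℝ × ℝ =>
        ENNReal.ofReal (y.2.1 ^ (θ / γ)) * ENNReal.ofReal ((y.1 * y.2.2) ^ θ))
      (by fun_prop) (by fun_prop)
  have hsplit : ∀ ω, ENNReal.ofReal
      ((D ω ^ (1 / γ) * A ω * (D ω ^ (1 / γ) * R ω ^ (1 / γ) * B ω)) ^ θ)
      = ENNReal.ofReal (D ω ^ (2 * θ / γ))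
        * (ENNReal.ofReal (R ω ^ (θ / γ)) * ENNReal.ofReal ((A ω * B ω) ^ θ)) := fun ω => by
    rw [Real.rpow_scaled_mul_scaled (hD0 ω) (hR0 ω) (hA0 ω) (hB0 ω),
      ENNReal.ofReal_mul (Real.rpow_nonneg (hD0 ω) _),
      ENNReal.ofReal_mul (Real.rpow_nonneg (hR0 ω) _)]
  calc P _ ≤ _ := measure_exp_neg_le_and_le P (by fun_prop) (by fun_prop) hθ.le t
    _ = ENNReal.ofReal (Real.exp (2 * θ * t)) * ((∫⁻ ω, ENNReal.ofReal (D ω ^ (2 * θ / γ)) ∂P)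
          * ∫⁻ ω, ENNReal.ofReal (R ω ^ (θ / γ)) * ENNReal.ofReal ((A ω * B ω) ^ θ) ∂P) := by
        simp_rw [hsplit]
        rw [lintegral_mul_eq_lintegral_mul_lintegral_of_indepFun'' (by fun_prop) (by fun_prop)
          hfactor]
    _ ≤ ENNReal.ofReal (Real.exp (2 * θ * t)) * ((∫⁻ ω, ENNReal.ofReal (D ω ^ (2 * θ / γ)) ∂P)
          * ((∫⁻ ω, ENNReal.ofReal (R ω ^ ((1 + ε) * θ / γ)) ∂P) ^ (1 / (1 + ε))
            * ((∫⁻ ω, ENNReal.ofReal (A ω ^ (2 * (1 + ε⁻¹) * θ)) ∂P)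
              * ∫⁻ ω, ENNReal.ofReal (B ω ^ (2 * (1 + ε⁻¹) * θ)) ∂P) ^ (1 / (2 * (1 + ε⁻¹))))) := by
        gcongr
        simpa only [← mul_div_assoc] using
          lintegral_ofReal_rpow_mul_mul_rpow_le hRm hAm hBm hR0 hA0 hB0 hε (θ / γ) θ
    _ = _ := by ring

/-- Abstract form of the second case (when one index is an ancestor of the other) of the
paper's Lemma 4.2: if `D` is independent of the triple `(A, R, B)` of nonnegative random
variables, then for `θ, γ, ε > 0` and `t ∈ ℝ`,
`P(D^{1/γ} A ≥ e^{-t}, D^{1/γ} R^{1/γ} B ≥ e^{-t})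
  ≤ e^{2θt} E[D^{2θ/γ}] E[R^{(1+ε)θ/γ}]^{1/(1+ε)}
    (E[A^{2(1+ε⁻¹)θ}] E[B^{2(1+ε⁻¹)θ}])^{1/(2(1+ε⁻¹))}`,
all expectations taken in `[0, ∞]`. -/
theorem stmt_2 {Ω : Type*} [MeasurableSpace Ω] (P : Measure Ω) [IsProbabilityMeasure P]
    (D A R B : Ω → ℝ)
    (hDm : Measurable D) (hAm : Measurable A) (hRm : Measurable R) (hBm : Measurable B)
    (hD0 : ∀ ω, 0 ≤ D ω) (hA0 : ∀ ω, 0 ≤ A ω) (hR0 : ∀ ω, 0 ≤ R ω) (hB0 : ∀ ω, 0 ≤ B ω)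
    (hindep : IndepFun D (fun ω => (A ω, R ω, B ω)) P)
    (θ γ ε t : ℝ) (hθ : 0 < θ) (hγ : 0 < γ) (hε : 0 < ε) :
    P {ω | Real.exp (-t) ≤ D ω ^ (1 / γ) * A ω ∧
           Real.exp (-t) ≤ D ω ^ (1 / γ) * R ω ^ (1 / γ) * B ω}
      ≤ ENNReal.ofReal (Real.exp (2 * θ * t))
        * (∫⁻ ω, ENNReal.ofReal (D ω ^ (2 * θ / γ)) ∂P)
        * (∫⁻ ω, ENNReal.ofReal (R ω ^ ((1 + ε) * θ / γ)) ∂P) ^ (1 / (1 + ε))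
        * ((∫⁻ ω, ENNReal.ofReal (A ω ^ (2 * (1 + ε⁻¹) * θ)) ∂P)
            * (∫⁻ ω, ENNReal.ofReal (B ω ^ (2 * (1 + ε⁻¹) * θ)) ∂P)) ^ (1 / (2 * (1 + ε⁻¹))) :=
  stmt_2_general P D A R B hDm hAm hRm hBm hD0 hA0 hR0 hB0 hindep θ γ ε t hθ hε
end

section
/- Let (T, d) be a metric space with finite diameter diam(T) := sup_{x,y∈T} d(x,y), let μ be a finite Borel measure on T, let λ > 0, and let f : T → ℝ be a Borel measurable, μ-square-integrable function with ∫_T f dμ = 0 and ∫_T f² dμ > 0. Suppose that for every x, y ∈ T one has (f(x) − f(y))² ≤ λ · (∫_T f² dμ) · d(x, y). Then λ · diam(T) · μ(T) ≥ 1, i.e. λ ≥ 1 / (diam(T) · μ(T)). -/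
/-!
Since `f` has mean zero it takes a value `≤ 0` and a value `≥ 0`, so each `f x ^ 2` is at most
some `(f x - f y) ^ 2 ≤ λ ‖f‖₂² diam T`. Integrating gives `‖f‖₂² ≤ λ ‖f‖₂² diam T μ(T)`, and one
divides by `‖f‖₂² > 0`.
-/

open MeasureTheory

theorem exists_nonpos_and_exists_nonneg_of_integral_eq_zero {α : Type*} [MeasurableSpace α]
    {μ : Measure α} [IsFiniteMeasure μ] {f : α → ℝ} (hμ : μ ≠ 0) (hf : Integrable f μ)
    (hmean : ∫ x, f x ∂μ = 0) : (∃ x, f x ≤ 0) ∧ ∃ x, 0 ≤ f x := by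
  have havg : ⨍ x, f x ∂μ = 0 := by rw [average_eq, hmean, smul_zero]
  exact ⟨havg ▸ exists_le_average hμ hf, havg ▸ exists_average_le hμ hf⟩

theorem sq_le_of_forall_sq_sub_le {α : Type*} {f : α → ℝ} {C : ℝ} (hneg : ∃ y, f y ≤ 0)
    (hnonneg : ∃ y, 0 ≤ f y) (hosc : ∀ x y, (f x - f y) ^ 2 ≤ C) (x : α) : f x ^ 2 ≤ C := by
  rcases le_total 0 (f x) with hx | hx
  · obtain ⟨y, hy⟩ := hneg
    nlinarith [hosc x y]
  · obtain ⟨y, hy⟩ := hnonneg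
    nlinarith [hosc x y]

theorem stmt_4_general {T : Type*} [MetricSpace T] [MeasurableSpace T]
    (hbdd : Bornology.IsBounded (Set.univ : Set T))
    (μ : Measure T) [IsFiniteMeasure μ]
    (lam : ℝ) (hlam : 0 < lam) (f : T → ℝ)
    (hf1 : Integrable f μ) (hf2 : Integrable (fun x => f x ^ 2) μ)
    (hmean : ∫ x, f x ∂μ = 0)
    (hpos : 0 < ∫ x, f x ^ 2 ∂μ)
    (hineq : ∀ x y, (f x - f y) ^ 2 ≤ lam * (∫ x, f x ^ 2 ∂μ) * dist x y) :
    1 ≤ lam * Metric.diam (Set.univ : Set T) * (μ Set.univ).toReal := by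
  set I := ∫ x, f x ^ 2 ∂μ
  set D := Metric.diam (Set.univ : Set T)
  have hμ : μ ≠ 0 := by
    rintro rfl
    simp [I] at hpos
  obtain ⟨hneg, hnonneg⟩ := exists_nonpos_and_exists_nonneg_of_integral_eq_zero hμ hf1 hmean
  have hosc (x y : T) : (f x - f y) ^ 2 ≤ lam * I * D :=
    (hineq x y).trans <| mul_le_mul_of_nonneg_left
      (Metric.dist_le_diam_of_mem hbdd (Set.mem_univ x) (Set.mem_univ y)) (by positivity)
  have hI : I ≤ lam * I * D * μ.real Set.univ := by
    calc I ≤ ∫ _, lam * I * D ∂μ :=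
          integral_mono hf2 (integrable_const _) (sq_le_of_forall_sq_sub_le hneg hnonneg hosc)
      _ = lam * I * D * μ.real Set.univ := by rw [integral_const, smul_eq_mul, mul_comm]
  rw [Measure.real] at hI
  exact le_of_mul_le_mul_left (a := I) (by linarith) hpos

/-- Neumann case of the paper's Lemma 2.2: if `f` is square-integrable with `∫ f dμ = 0` and
`∫ f² dμ > 0` on a bounded metric space `T` with finite Borel measure `μ`, and
`(f(x) − f(y))² ≤ λ (∫ f² dμ) d(x, y)` for all `x, y`, then `λ · diam(T) · μ(T) ≥ 1`. -/
theorem stmt_4 {T : Type*} [MetricSpace T] [MeasurableSpace T] [BorelSpace T]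
    (hbdd : Bornology.IsBounded (Set.univ : Set T))
    (μ : Measure T) [IsFiniteMeasure μ]
    (lam : ℝ) (hlam : 0 < lam) (f : T → ℝ) (hfm : Measurable f)
    (hf1 : Integrable f μ) (hf2 : Integrable (fun x => f x ^ 2) μ)
    (hmean : ∫ x, f x ∂μ = 0)
    (hpos : 0 < ∫ x, f x ^ 2 ∂μ)
    (hineq : ∀ x y, (f x - f y) ^ 2 ≤ lam * (∫ x, f x ^ 2 ∂μ) * dist x y) :
    1 ≤ lam * Metric.diam (Set.univ : Set T) * (μ Set.univ).toReal :=
  stmt_4_general hbdd μ lam hlam f hf1 hf2 hmean hpos hineq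
end
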